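/- Let X ⊆ ℝ^n be nonempty, f : ℝ^n → ℝ^m, K ⊆ ℝ^m a pointed closed convex cone (K ∩ (−K) = {0}), e ∈ K \ {0}, and x̄ ∈ X. Then cl cone[f(X) + K − (f(x̄) − e)] ∩ (−K) = {0} if and only if cl cone[f(X) − (f(x̄) − e)] ∩ (−K) = {0}. -/

import Mathlib

open Set Pointwise

/-- The smallest cone containing `D`: `cone D = {t • d : t ≥ 0, d ∈ D}`. -/
def coneGen {E : Type*} [AddCommGroup E] [Module ℝ E] (D : Set E) : Set E :=
  {x | ∃ t : ℝ, 0 ≤ t ∧ ∃ d ∈ D, x = t • d}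

/-!
If `C` and `K` are closed cones in a finite-dimensional space with `C ∩ (-K) = {0}`, then
compactness of the unit sphere gives `δ > 0` with `δ ‖c‖ ≤ ‖c + k‖` for all `c ∈ C`, `k ∈ K`;
hence bounded pieces of `C + K` lie in a compact set plus `K`, and `C + K` is closed.
Applied to `C = cl cone A`, this puts `cl cone (A + K)` inside `C + K`, and a point `c + k` of
`C + K` lying in `-K` has `c ∈ C ∩ (-K) = {0}` and then `k ∈ K ∩ (-K) = {0}`.
The converse direction is monotonicity, as `0 ∈ K`.
-/

section Group

variable {E : Type*} [AddCommGroup E]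

theorem add_inter_neg_subset_zero {C K : Set E} (hKadd : ∀ u ∈ K, ∀ v ∈ K, u + v ∈ K)
    (hK : K ∩ -K ⊆ {0}) (hCK : C ∩ -K ⊆ {0}) : (C + K) ∩ -K ⊆ {0} := by
  rintro _ ⟨⟨c, hc, k, hk, rfl⟩, hck⟩
  have hnegc : -c ∈ K := by simpa using hKadd _ hck _ hk
  obtain rfl : c = 0 := hCK ⟨hc, by simpa using hnegc⟩
  simpa using hK ⟨hk, by simpa using hck⟩

theorem inter_neg_eq_zero_iff {S K : Set E} (hK0 : (0 : E) ∈ K) :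
    S ∩ -K = {0} ↔ (0 : E) ∈ S ∧ S ∩ -K ⊆ {0} := by
  rw [Subset.antisymm_iff, singleton_subset_iff, and_comm]
  simp [hK0]

end Group

section Cone

variable {E : Type*} [AddCommGroup E] [Module ℝ E]

def IsConeSet (C : Set E) : Prop :=
  ∀ t : ℝ, 0 ≤ t → ∀ v ∈ C, t • v ∈ C

theorem isConeSet_coneGen (D : Set E) : IsConeSet (coneGen D) := by
  rintro t ht _ ⟨s, hs, d, hd, rfl⟩
  exact ⟨t * s, mul_nonneg ht hs, d, hd, smul_smul t s d⟩

theorem coneGen_mono {D D' : Set E} (h : D ⊆ D') : coneGen D ⊆ coneGen D' := by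
  rintro _ ⟨t, ht, d, hd, rfl⟩
  exact ⟨t, ht, d, h hd, rfl⟩

theorem coneGen_add_subset {A K : Set E} (hK : IsConeSet K) : coneGen (A + K) ⊆ coneGen A + K := by
  rintro _ ⟨t, ht, _, ⟨a, ha, k, hk, rfl⟩, rfl⟩
  exact ⟨t • a, ⟨t, ht, a, ha, rfl⟩, t • k, hK t ht k hk, (smul_add t a k).symm⟩

theorem Convex.add_mem_of_isConeSet {K : Set E} (hKconv : Convex ℝ K) (hK : IsConeSet K)
    {u v : E} (hu : u ∈ K) (hv : v ∈ K) : u + v ∈ K := by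
  have hmid := hKconv hu hv (by norm_num : (0 : ℝ) ≤ 1 / 2) (by norm_num : (0 : ℝ) ≤ 1 / 2)
    (by norm_num)
  convert hK 2 (by norm_num) _ hmid using 1
  rw [smul_add, smul_smul, smul_smul]
  norm_num

end Cone

section Topology

variable {E : Type*} [NormedAddCommGroup E] [NormedSpace ℝ E]

theorem IsConeSet.closure {C : Set E} (hC : IsConeSet C) : IsConeSet (closure C) :=
  fun t ht _ hv => map_mem_closure (continuous_const_smul t) hv fun w hw => hC t ht w hw

theorem zero_mem_closure_coneGen_iff {D : Set E} : (0 : E) ∈ closure (coneGen D) ↔ D.Nonempty := by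
  refine ⟨fun h => ?_, fun ⟨d, hd⟩ => subset_closure ⟨0, le_rfl, d, hd, (zero_smul ℝ d).symm⟩⟩
  obtain ⟨_, _, _, d, hd, _⟩ := closure_nonempty_iff.1 ⟨0, h⟩
  exact ⟨d, hd⟩

variable [ProperSpace E]

theorem IsConeSet.exists_pos_mul_norm_le_norm_add {C K : Set E} (hC : IsConeSet C)
    (hCc : IsClosed C) (hK : IsConeSet K) (hKc : IsClosed K) (hCK : C ∩ -K ⊆ {0}) :
    ∃ δ > 0, ∀ c ∈ C, ∀ k ∈ K, δ * ‖c‖ ≤ ‖c + k‖ := by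
  have hdisj : Disjoint (C ∩ Metric.sphere 0 1) (-K) := by
    refine disjoint_left.2 fun c ⟨hcC, hc1⟩ hcK => ?_
    rw [hCK ⟨hcC, hcK⟩, mem_sphere_zero_iff_norm, norm_zero] at hc1
    exact zero_ne_one hc1
  obtain ⟨r, hr, hsep⟩ := Metric.exists_pos_forall_lt_edist
    ((isCompact_sphere 0 1).inter_left hCc) hKc.neg hdisj
  refine ⟨r, hr, fun c hc k hk => ?_⟩
  rcases eq_or_ne c 0 with rfl | hc0
  · simp
  have hpos : 0 < ‖c‖ := norm_pos_iff.2 hc0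
  have hsep' := hsep (‖c‖⁻¹ • c)
    ⟨hC _ (inv_nonneg.2 hpos.le) c hc, by simp [norm_smul, hpos.ne']⟩
    (-(‖c‖⁻¹ • k)) (by simpa using hK _ (inv_nonneg.2 hpos.le) k hk)
  rw [edist_dist, ENNReal.coe_lt_ofReal, dist_eq_norm, sub_neg_eq_add, ← smul_add,
    norm_smul, norm_inv, norm_norm] at hsep'
  linarith [(lt_inv_mul_iff₀ hpos).1 hsep']

theorem IsConeSet.isClosed_add {C K : Set E} (hC : IsConeSet C) (hCc : IsClosed C)
    (hK : IsConeSet K) (hKc : IsClosed K) (hCK : C ∩ -K ⊆ {0}) : IsClosed (C + K) := by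
  obtain ⟨δ, hδ, hbound⟩ := hC.exists_pos_mul_norm_le_norm_add hCc hK hKc hCK
  refine isClosed_of_closure_subset fun x hx => ?_
  have hT : IsClosed ((C ∩ Metric.closedBall 0 ((‖x‖ + 1) / δ)) + K) :=
    hKc.add_left_of_isCompact ((isCompact_closedBall 0 _).inter_left hCc)
  have hlocal : Metric.ball x 1 ∩ (C + K) ⊆ (C ∩ Metric.closedBall 0 ((‖x‖ + 1) / δ)) + K := by
    rintro _ ⟨hy, c, hc, k, hk, rfl⟩
    refine ⟨c, ⟨hc, ?_⟩, k, hk, rfl⟩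
    rw [mem_closedBall_zero_iff, le_div_iff₀ hδ]
    have := norm_le_norm_add_const_of_dist_le (Metric.mem_ball.1 hy).le
    linarith [hbound c hc k hk]
  exact add_subset_add_right inter_subset_left <| hT.closure_subset_iff.2 hlocal <|
    Metric.isOpen_ball.inter_closure ⟨Metric.mem_ball_self one_pos, hx⟩

theorem closure_coneGen_add_inter_neg_subset_zero {A K : Set E} (hK : IsConeSet K)
    (hKc : IsClosed K) (hKadd : ∀ u ∈ K, ∀ v ∈ K, u + v ∈ K) (hKpt : K ∩ -K ⊆ {0})
    (hA : closure (coneGen A) ∩ -K ⊆ {0}) : closure (coneGen (A + K)) ∩ -K ⊆ {0} := by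
  have hclosed : IsClosed (closure (coneGen A) + K) :=
    (isConeSet_coneGen A).closure.isClosed_add isClosed_closure hK hKc hA
  have hsub : closure (coneGen (A + K)) ⊆ closure (coneGen A) + K :=
    closure_minimal ((coneGen_add_subset hK).trans (add_subset_add_right subset_closure)) hclosed
  exact (inter_subset_inter_left _ hsub).trans (add_inter_neg_subset_zero hKadd hKpt hA)

end Topology

theorem stmt_7_general {n m : ℕ} (X : Set (Fin n → ℝ))
    (f : (Fin n → ℝ) → (Fin m → ℝ))
    (K : Set (Fin m → ℝ))
    (hKcone : ∀ t : ℝ, 0 ≤ t → ∀ v ∈ K, t • v ∈ K)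
    (hKclosed : IsClosed K)
    (hKconvex : Convex ℝ K)
    (hKpointed : K ∩ (-K) = {0})
    (e : Fin m → ℝ)
    (xbar : Fin n → ℝ) :
    closure (coneGen (((fun x => f x - (f xbar - e)) '' X) + K)) ∩ (-K) = {0} ↔
      closure (coneGen ((fun x => f x - (f xbar - e)) '' X)) ∩ (-K) = {0} := by
  set A := (fun x => f x - (f xbar - e)) '' X
  have hK0 : (0 : Fin m → ℝ) ∈ K := (hKpointed.ge (mem_singleton 0)).1
  have hKadd : ∀ u ∈ K, ∀ v ∈ K, u + v ∈ K := fun u hu v hv =>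
    hKconvex.add_mem_of_isConeSet hKcone hu hv
  rw [inter_neg_eq_zero_iff hK0, inter_neg_eq_zero_iff hK0, zero_mem_closure_coneGen_iff,
    zero_mem_closure_coneGen_iff, add_nonempty, and_iff_left (b := K.Nonempty) ⟨0, hK0⟩]
  refine and_congr_right fun _ => ⟨fun h => ?_, fun h => ?_⟩
  · exact (inter_subset_inter_left _ (closure_mono (coneGen_mono (subset_add_left A hK0)))).trans h
  · exact closure_coneGen_add_inter_neg_subset_zero hKcone hKclosed hKadd hKpointed.subset h

/-- For a pointed closed convex cone `K`, `e ∈ K \ {0}` and `x̄ ∈ X`: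
`cl cone [f(X) + K - (f(x̄) - e)] ∩ (-K) = {0}` iff
`cl cone [f(X) - (f(x̄) - e)] ∩ (-K) = {0}`. -/
theorem stmt_7 {n m : ℕ} (X : Set (Fin n → ℝ)) (hX : X.Nonempty)
    (f : (Fin n → ℝ) → (Fin m → ℝ))
    (K : Set (Fin m → ℝ)) (hKne : K.Nonempty)
    (hKcone : ∀ t : ℝ, 0 ≤ t → ∀ v ∈ K, t • v ∈ K)
    (hKclosed : IsClosed K)
    (hKconvex : Convex ℝ K)
    (hKpointed : K ∩ (-K) = {0})
    (e : Fin m → ℝ) (heK : e ∈ K) (he0 : e ≠ 0)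
    (xbar : Fin n → ℝ) (hxbar : xbar ∈ X) :
    closure (coneGen (((fun x => f x - (f xbar - e)) '' X) + K)) ∩ (-K) = {0} ↔
      closure (coneGen ((fun x => f x - (f xbar - e)) '' X)) ∩ (-K) = {0} :=
  stmt_7_general X f K hKcone hKclosed hKconvex hKpointed e xbar
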